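/- arXiv:1912.10560 — 3 statements merged into one kernel-verified Lean document; each statement's English description precedes it below -/
import Mathlib

section
/- Conversely, suppose G ∈ GL(3,ℝ) has det G > 0 and satisfies r(Gᵀ·C·G) = r(C) and det(Gᵀ·C·G) = det(C) for every symmetric positive-definite 3×3 real matrix C, where r(C) = C₂₂C₃₃ − C₂₃C₃₂. Then det G = 1 and the first row of G is either (1,0,0) or (−1,0,0). -/
open Matrix

/-- `r C = C₂₂C₃₃ − C₂₃C₃₂`, the (1,1) cofactor of a 3×3 matrix (0-based indices). -/
def rInv (C : Matrix (Fin 3) (Fin 3) ℝ) : ℝ := C 1 1 * C 2 2 - C 1 2 * C 2 1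

/-!
Since `r C` is the `(0,0)` entry of `adj C` and the adjugate is anti-multiplicative,
`r (Gᵀ C G) = wᵀ (adj C) w` with `w` the first row of `adj G`. Taking `C = 1` gives
`det G = 1` and `|w| = 1`; taking `C = diag(2,1,1)`, whose adjugate is `diag(1,2,2)`, forces
`w = ±e₀`. As `adj G * G = 1`, the first row of `G` is then `±e₀` as well.
-/

lemma rInv_eq_adjugate_apply (C : Matrix (Fin 3) (Fin 3) ℝ) : rInv C = adjugate C 0 0 := by
  simp [rInv, adjugate_fin_three]

lemma rInv_transpose_mul_mul (G C : Matrix (Fin 3) (Fin 3) ℝ) :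
    rInv (Gᵀ * C * G) = adjugate G 0 ⬝ᵥ (adjugate C *ᵥ adjugate G 0) := by
  rw [rInv_eq_adjugate_apply, adjugate_mul_distrib, adjugate_mul_distrib, ← adjugate_transpose,
    mul_apply]
  rfl

lemma exists_eq_single_zero_of_dotProduct_diagonal_eq_one {w : Fin 3 → ℝ} (hw : w ⬝ᵥ w = 1)
    (hdiag : w ⬝ᵥ (diagonal ![1, 2, 2] *ᵥ w) = 1) : ∃ c : ℝ, c * c = 1 ∧ w = Pi.single 0 c := by
  simp only [dotProduct, mulVec_diagonal, Fin.sum_univ_three, cons_val_zero, cons_val_one,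
    cons_val_two, tail_cons, head_cons, one_mul] at hw hdiag
  have h1 : w 1 = 0 := by nlinarith [sq_nonneg (w 1), sq_nonneg (w 2)]
  have h2 : w 2 = 0 := by nlinarith [sq_nonneg (w 1), sq_nonneg (w 2)]
  refine ⟨w 0, by rw [h1, h2] at hw; linarith, ?_⟩
  ext i
  fin_cases i <;> simp [h1, h2]

lemma row_eq_single_of_adjugate_row_eq_single {n R : Type*} [Fintype n] [DecidableEq n]
    [CommRing R] {A : Matrix n n R} (hA : A.det = 1) {i : n} {c : R} (hc : c * c = 1)
    (h : adjugate A i = Pi.single i c) : A i = Pi.single i c := by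
  have hrow : c • A i = (1 : Matrix n n R) i := by
    have := congrFun (adjugate_mul A) i
    rwa [mul_apply_eq_vecMul, h, single_vecMul, hA, one_smul] at this
  calc A i = c • (c • A i) := by rw [smul_smul, hc, one_smul]
    _ = Pi.single i c := by
      rw [hrow]; ext j; simp [one_apply, Pi.single_apply, eq_comm]

/-- If `G ∈ GL(3,ℝ)` has positive determinant and preserves both `r` and
`det` under congruence for every symmetric positive-definite `C`, then `det G = 1` and
the first row of `G` is `(1,0,0)` or `(−1,0,0)`. -/
theorem K1_converse (G : GL (Fin 3) ℝ)
    (hdet : 0 < Matrix.det (G : Matrix (Fin 3) (Fin 3) ℝ))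
    (h : ∀ C : Matrix (Fin 3) (Fin 3) ℝ, C.IsSymm → C.PosDef →
      rInv ((G : Matrix (Fin 3) (Fin 3) ℝ)ᵀ * C * G) = rInv C ∧
      ((G : Matrix (Fin 3) (Fin 3) ℝ)ᵀ * C * G).det = C.det) :
    Matrix.det (G : Matrix (Fin 3) (Fin 3) ℝ) = 1 ∧
    ((G : Matrix (Fin 3) (Fin 3) ℝ) 0 = ![1, 0, 0] ∨
     (G : Matrix (Fin 3) (Fin 3) ℝ) 0 = ![-1, 0, 0]) := by
  set A : Matrix (Fin 3) (Fin 3) ℝ := ↑G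
  obtain ⟨hr₁, hd₁⟩ := h 1 isSymm_one PosDef.one
  obtain ⟨hr₂, -⟩ := h (diagonal ![2, 1, 1]) (isSymm_diagonal _)
    (PosDef.diagonal fun i ↦ by fin_cases i <;> norm_num)
  have hA : A.det = 1 := by
    rw [mul_one, det_mul, det_transpose, det_one] at hd₁
    exact (mul_self_eq_one_iff.mp hd₁).resolve_right (by linarith)
  have hadj : adjugate (diagonal ![2, 1, 1]) = diagonal ![(1 : ℝ), 2, 2] := by
    rw [adjugate_fin_three]; ext i j; fin_cases i <;> fin_cases j <;> simp
  rw [rInv_transpose_mul_mul, adjugate_one, one_mulVec] at hr₁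
  rw [rInv_transpose_mul_mul, hadj] at hr₂
  obtain ⟨c, hc, hw⟩ := exists_eq_single_zero_of_dotProduct_diagonal_eq_one
    (hr₁.trans (by simp [rInv])) (hr₂.trans (by simp [rInv]))
  refine ⟨hA, ?_⟩
  rw [row_eq_single_of_adjugate_row_eq_single hA hc hw]
  rcases mul_self_eq_one_iff.mp hc with rfl | rfl
  · exact Or.inl (by ext i; fin_cases i <;> rfl)
  · exact Or.inr (by ext i; fin_cases i <;> rfl)
end

section
/- For any function ψ : ℝ × ℝ → ℝ, the hyperelastic constitutive function s(F) = ψ(r(Fᵀ·F), det(Fᵀ·F)) on GL(3,ℝ), where r(C) = C₂₂C₃₃ − C₂₃C₃₂, has every element of K₁ = {G ∈ GL(3,ℝ) : det G = 1 and the first row of G is (1,0,0)} as a material symmetry: s(F·G) = s(F) for all F ∈ GL(3,ℝ) and all G ∈ K₁. -/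
open Matrix

lemma rInv_conj (G C : Matrix (Fin 3) (Fin 3) ℝ) (hdet : G.det = 1)
    (h0 : G 0 = ![1, 0, 0]) : rInv (Gᵀ * C * G) = rInv C := by
  have h01 : G 0 1 = 0 := by rw [h0]; rfl
  have h02 : G 0 2 = 0 := by rw [h0]; rfl
  have h00 : G 0 0 = 1 := by rw [h0]; rfl
  rw [Matrix.det_fin_three] at hdet
  simp only [rInv, Matrix.mul_apply, Fin.sum_univ_three, Matrix.transpose_apply,
    h00, h01, h02] at hdet ⊢
  linear_combination (C 1 1 * C 2 2 - C 1 2 * C 2 1) * (G 1 1 * G 2 2 - G 1 2 * G 2 1 + 1) * hdet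

/-- For any `ψ : ℝ × ℝ → ℝ`, the hyperelastic constitutive function
`s F = ψ (r (Fᵀ·F), det (Fᵀ·F))` has every element of
`K₁ = {G ∈ GL(3,ℝ) : det G = 1 ∧ first row of G = (1,0,0)}` as a material symmetry. -/
theorem K1_material_symmetry_of_psi (ψ : ℝ × ℝ → ℝ) :
    let s : GL (Fin 3) ℝ → ℝ := fun F =>
      ψ (rInv ((F : Matrix (Fin 3) (Fin 3) ℝ)ᵀ * F),
         ((F : Matrix (Fin 3) (Fin 3) ℝ)ᵀ * F).det)
    ∀ G : GL (Fin 3) ℝ,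
      Matrix.det (G : Matrix (Fin 3) (Fin 3) ℝ) = 1 →
      (G : Matrix (Fin 3) (Fin 3) ℝ) 0 = ![1, 0, 0] →
      ∀ F : GL (Fin 3) ℝ, s (F * G) = s F := by
  intro s G hdet h0 F
  set Gm := (G : Matrix (Fin 3) (Fin 3) ℝ)
  set Fm := (F : Matrix (Fin 3) (Fin 3) ℝ)
  have hFG : ((F * G : GL (Fin 3) ℝ) : Matrix (Fin 3) (Fin 3) ℝ) = Fm * Gm := rfl
  have key : (Fm * Gm)ᵀ * (Fm * Gm) = Gmᵀ * (Fmᵀ * Fm) * Gm := by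
    simp only [Matrix.transpose_mul, Matrix.mul_assoc]
  simp only [s, hFG, key]
  rw [rInv_conj Gm (Fmᵀ * Fm) hdet h0]
  congr 1
  rw [Matrix.det_mul, Matrix.det_mul, Matrix.det_transpose, hdet, one_mul, mul_one]
end

section
/- If G ∈ GL(3,ℝ) with det G > 0 is a material symmetry simultaneously of the two constitutive functions s_r(F) = r(Fᵀ·F) and s_d(F) = det(Fᵀ·F) on GL(3,ℝ) — i.e. r((F·G)ᵀ·(F·G)) = r(Fᵀ·F) and det((F·G)ᵀ·(F·G)) = det(Fᵀ·F) for all F ∈ GL(3,ℝ), where r(C) = C₂₂C₃₃ − C₂₃C₃₂ — then det G = 1 and the first row of G is either (1,0,0) or (−1,0,0). -/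
open Matrix

set_option maxHeartbeats 1000000

/-- If `G ∈ GL(3,ℝ)` with `det G > 0` is simultaneously a material
symmetry of `s_r F = r (Fᵀ·F)` and of `s_d F = det (Fᵀ·F)`, then `det G = 1` and the
first row of `G` is `(1,0,0)` or `(−1,0,0)`. -/
theorem symmetry_of_r_and_det_characterization (G : GL (Fin 3) ℝ)
    (hdet : 0 < Matrix.det (G : Matrix (Fin 3) (Fin 3) ℝ))
    (hr : ∀ F : GL (Fin 3) ℝ,
      rInv (((F * G : GL (Fin 3) ℝ) : Matrix (Fin 3) (Fin 3) ℝ)ᵀ * ((F * G : GL (Fin 3) ℝ) : Matrix (Fin 3) (Fin 3) ℝ)) =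
      rInv ((F : Matrix (Fin 3) (Fin 3) ℝ)ᵀ * F))
    (hd : ∀ F : GL (Fin 3) ℝ,
      (((F * G : GL (Fin 3) ℝ) : Matrix (Fin 3) (Fin 3) ℝ)ᵀ * ((F * G : GL (Fin 3) ℝ) : Matrix (Fin 3) (Fin 3) ℝ)).det =
      ((F : Matrix (Fin 3) (Fin 3) ℝ)ᵀ * F).det) :
    Matrix.det (G : Matrix (Fin 3) (Fin 3) ℝ) = 1 ∧
    ((G : Matrix (Fin 3) (Fin 3) ℝ) 0 = ![1, 0, 0] ∨
     (G : Matrix (Fin 3) (Fin 3) ℝ) 0 = ![-1, 0, 0]) := by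
  set g : Matrix (Fin 3) (Fin 3) ℝ := (G : Matrix (Fin 3) (Fin 3) ℝ) with hg
  -- det g = 1
  have h1 := hd 1
  simp only [one_mul, Units.val_one, Matrix.transpose_one, Matrix.one_mul, Matrix.det_one,
    Matrix.det_mul, Matrix.det_transpose, ← hg] at h1
  have hdet1 : g.det = 1 := by nlinarith
  -- the diagonal GL element
  have hD : (Matrix.diagonal ![(2:ℝ), 1, 1]).det ≠ 0 := by
    simp [Matrix.det_diagonal, Fin.prod_univ_three]
  set D : GL (Fin 3) ℝ := Matrix.GeneralLinearGroup.mkOfDetNeZero _ hD with hDdef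
  have hDval : (D : Matrix (Fin 3) (Fin 3) ℝ) = Matrix.diagonal ![(2:ℝ), 1, 1] := rfl
  have h2 := hr 1
  have h3 := hr D
  simp only [one_mul, Units.val_mul, hDval, ← hg, Units.val_one] at h2 h3
  rw [Matrix.transpose_one, Matrix.one_mul] at h2
  -- expand rInv to polynomials
  simp only [rInv, Matrix.mul_apply, Matrix.transpose_apply, Fin.sum_univ_three,
    Matrix.diagonal_apply, Matrix.cons_val_zero, Matrix.cons_val_one, Matrix.head_cons,
    Matrix.cons_val_two, Matrix.tail_cons, if_true, if_false] at h2 h3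
  norm_num [Matrix.one_apply, Fin.ext_iff] at h2 h3
  rw [Matrix.det_fin_three] at hdet1
  set v0 : ℝ := g 1 1 * g 2 2 - g 2 1 * g 1 2 with hv0
  set v1 : ℝ := g 2 1 * g 0 2 - g 0 1 * g 2 2 with hv1
  set v2 : ℝ := g 0 1 * g 1 2 - g 1 1 * g 0 2 with hv2
  have e2 : v0 * v0 + v1 * v1 + v2 * v2 = 1 := by rw [hv0, hv1, hv2]; linear_combination h2
  have e3 : v0 * v0 + 4 * (v1 * v1) + 4 * (v2 * v2) = 1 := by
    rw [hv0, hv1, hv2]; linear_combination h3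
  have hz1 : v1 = 0 :=
    mul_self_eq_zero.mp (by linarith [mul_self_nonneg v1, mul_self_nonneg v2])
  have hz2 : v2 = 0 :=
    mul_self_eq_zero.mp (by linarith [mul_self_nonneg v1, mul_self_nonneg v2])
  have hv0sq : v0 * v0 = 1 := by rw [hz1, hz2] at e2; linarith
  have hA : v0 * g 0 0 = 1 := by
    rw [hv0]
    linear_combination hdet1 - g 1 0 * hz1 - g 2 0 * hz2
  have hB : v0 * g 0 1 = 0 := by
    rw [hv0]
    linear_combination (- g 1 1) * hz1 - g 2 1 * hz2
  have hC : v0 * g 0 2 = 0 := by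
    rw [hv0]
    linear_combination (- g 1 2) * hz1 - g 2 2 * hz2
  refine ⟨by rw [Matrix.det_fin_three]; exact hdet1, ?_⟩
  rcases mul_self_eq_one_iff.mp hv0sq with h | h
  · left
    rw [h, one_mul] at hA hB hC
    funext i
    fin_cases i <;> simp [hA, hB, hC]
  · right
    rw [h] at hA hB hC
    have hA' : g 0 0 = -1 := by linarith
    have hB' : g 0 1 = 0 := by linarith
    have hC' : g 0 2 = 0 := by linarith
    funext i
    fin_cases i <;> simp [hA', hB', hC']
end
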